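/- The coefficients a_{n,k} = 2^{−n}·(−C(n, ⌊(n−k)/2⌋) + 2·Σ_{i=0}^{n−k} 2^i·C(n−i, ⌊(n−i−k)/2⌋)) satisfy the recurrence a_{n+1,0} = 2 + ½·(a_{n,0} + a_{n,1}) for all n ≥ 0. -/

import Mathlib

/-- Binomial coefficient `C(m, j)` with the convention `C(m, j) = 0` for `j < 0`. -/
def binomZ (m : ℕ) (j : ℤ) : ℚ :=
  if j < 0 then 0 else (m.choose j.toNat : ℚ)

/-- Random-walk coefficients
`a_{n,k} = 2^{−n}·(−C(n, ⌊(n−k)/2⌋) + 2·Σ_{i=0}^{n−k} 2^i·C(n−i, ⌊(n−i−k)/2⌋))`. -/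
def rwA (n k : ℕ) : ℚ :=
  (1 / 2 ^ n) * (-(binomZ n (((n : ℤ) - k).fdiv 2)) +
    2 * ∑ i ∈ Finset.range (n - k + 1),
      2 ^ i * binomZ (n - i) (((n : ℤ) - i - k).fdiv 2))

/-!
Write `c(m, k) = C(m, ⌊(m - k)/2⌋)` (`binomHalf`). Pascal's rule together with the symmetry
`C(m, ⌊(m+1)/2⌋) = C(m, ⌊m/2⌋)` gives `c(m+1, 0) = c(m, 0) + c(m, 1)`. Applied termwise to the sum
defining `a_{n+1,0}`, this splits it into the sums of `a_{n,0}` and `a_{n,1}`, plus the last term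
`2^{n+1}·c(0, 0)`, which produces the constant `2`.
-/

open Finset

theorem binomZ_natCast (m k : ℕ) : binomZ m k = m.choose k := by
  simp [binomZ]

theorem binomZ_of_neg {m : ℕ} {j : ℤ} (hj : j < 0) : binomZ m j = 0 := if_pos hj

theorem binomZ_succ_succ (m : ℕ) (j : ℤ) :
    binomZ (m + 1) (j + 1) = binomZ m j + binomZ m (j + 1) := by
  rcases lt_trichotomy j (-1) with hj | rfl | hj
  · rw [binomZ_of_neg (by omega), binomZ_of_neg (by omega), binomZ_of_neg (by omega), add_zero]
  · norm_num [binomZ]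
  · lift j to ℕ using (by omega)
    rw [← Nat.cast_succ, binomZ_natCast, binomZ_natCast, binomZ_natCast, Nat.choose_succ_succ',
      Nat.cast_add]

theorem binomZ_succ_div_two (m : ℕ) : binomZ m (((m : ℤ) + 1) / 2) = binomZ m ((m : ℤ) / 2) := by
  rw [show ((m : ℤ) + 1) / 2 = ((m + 1) / 2 : ℕ) by omega, show (m : ℤ) / 2 = (m / 2 : ℕ) by omega,
    binomZ_natCast, binomZ_natCast, Nat.choose_symm_of_eq_add (show m = (m + 1) / 2 + m / 2 by omega)]

def binomHalf (m k : ℕ) : ℚ := binomZ m (((m : ℤ) - k).fdiv 2)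

theorem binomHalf_succ_zero (m : ℕ) : binomHalf (m + 1) 0 = binomHalf m 0 + binomHalf m 1 := by
  simp only [binomHalf, Int.fdiv_eq_ediv_of_nonneg _ zero_le_two, Nat.cast_zero, Nat.cast_one]
  rw [show (((m + 1 : ℕ) : ℤ) - 0) / 2 = ((m : ℤ) - 1) / 2 + 1 by omega, binomZ_succ_succ,
    show ((m : ℤ) - 1) / 2 + 1 = ((m : ℤ) + 1) / 2 by omega, binomZ_succ_div_two, sub_zero, add_comm]

theorem binomHalf_zero_zero : binomHalf 0 0 = 1 := by
  simp [binomHalf, binomZ]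

theorem binomHalf_of_lt {m k : ℕ} (h : m < k) : binomHalf m k = 0 :=
  binomZ_of_neg (Int.fdiv_neg_of_neg_of_pos (by omega) two_pos)

theorem rwA_eq_sum_range (n k : ℕ) :
    rwA n k = (1 / 2 ^ n) * (-binomHalf n k +
      2 * ∑ i ∈ range (n + 1), 2 ^ i * binomHalf (n - i) k) := by
  have hsum : ∑ i ∈ range (n - k + 1), 2 ^ i * binomZ (n - i) (((n : ℤ) - i - k).fdiv 2)
      = ∑ i ∈ range (n + 1), 2 ^ i * binomHalf (n - i) k := by
    refine sum_subset_zero_on_sdiff (range_subset_range.2 (by omega)) ?_ ?_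
    · intro i hi
      rw [mem_sdiff, mem_range, mem_range] at hi
      rw [binomHalf_of_lt (by omega), mul_zero]
    · intro i hi
      rw [mem_range] at hi
      rw [binomHalf, show ((n - i : ℕ) : ℤ) - k = n - i - k by omega]
  rw [rwA, hsum, binomHalf]

/-- `a_{n+1,0} = 2 + ½·(a_{n,0} + a_{n,1})` for all `n ≥ 0`. -/
theorem rwA_recurrence_zero (n : ℕ) :
    rwA (n + 1) 0 = 2 + (1 / 2) * (rwA n 0 + rwA n 1) := by
  have hsplit : ∑ i ∈ range (n + 1 + 1), 2 ^ i * binomHalf (n + 1 - i) 0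
      = 2 ^ (n + 1) + ∑ i ∈ range (n + 1), 2 ^ i * binomHalf (n - i) 0
        + ∑ i ∈ range (n + 1), 2 ^ i * binomHalf (n - i) 1 := by
    have hterm : ∀ i ∈ range (n + 1), 2 ^ i * binomHalf (n + 1 - i) 0
        = 2 ^ i * binomHalf (n - i) 0 + 2 ^ i * binomHalf (n - i) 1 := by
      intro i hi
      rw [mem_range] at hi
      rw [Nat.sub_add_comm (by omega), binomHalf_succ_zero, mul_add]
    rw [sum_range_succ, sum_congr rfl hterm, sum_add_distrib, Nat.sub_self, binomHalf_zero_zero]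
    ring
  rw [rwA_eq_sum_range, rwA_eq_sum_range, rwA_eq_sum_range, hsplit, binomHalf_succ_zero]
  field_simp
  ring
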